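/- arXiv:2410.06881 — 2 statements merged into one kernel-verified Lean document; each statement's English description precedes it below -/
import Mathlib

section
/- Let P be the poset on {r, p_1, …, p_{d−1}} whose only relations are p_i ⪯ r. The poset ball of P — the convex hull of all partially ordered binary vectors and their negations — is the cylinder with cross-section [0,1]^{d−1} and height 2 in the root direction, and its volume is 2. Since the volume of the cube [−1,1]^d is 2^d, the ratio of the cube volume to the poset ball volume is 2^{d−1}. -/
open MeasureTheory Set

noncomputable def shear (d : ℕ) (hd : 0 < d) : (Fin d → ℝ) ≃ₗ[ℝ] (Fin d → ℝ) where
  toFun x i := if i = ⟨0, hd⟩ then x i else x i - x ⟨0, hd⟩ / 2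
  invFun y i := if i = ⟨0, hd⟩ then y i else y i + y ⟨0, hd⟩ / 2
  map_add' x y := by funext i; by_cases h : i = (⟨0, hd⟩ : Fin d) <;> simp [h] <;> ring
  map_smul' c x := by funext i; by_cases h : i = (⟨0, hd⟩ : Fin d) <;> simp [h] <;> ring
  left_inv x := by funext i; by_cases h : i = (⟨0, hd⟩ : Fin d) <;> simp [h]
  right_inv y := by funext i; by_cases h : i = (⟨0, hd⟩ : Fin d) <;> simp [h]

lemma shear_apply (d : ℕ) (hd : 0 < d) (x : Fin d → ℝ) (i : Fin d) :
    shear d hd x i = if i = ⟨0, hd⟩ then x i else x i - x ⟨0, hd⟩ / 2 := rfl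

lemma shear_det (d : ℕ) (hd : 0 < d) :
    LinearMap.det (shear d hd : (Fin d → ℝ) →ₗ[ℝ] (Fin d → ℝ)) = 1 := by
  rw [← LinearMap.det_toMatrix']
  set M := LinearMap.toMatrix' (shear d hd : (Fin d → ℝ) →ₗ[ℝ] (Fin d → ℝ)) with hM
  have hMe : ∀ i j, M i j = if j = ⟨0, hd⟩ then (if i = ⟨0, hd⟩ then 1 else -(1/2))
      else (if i = j then 1 else 0) := by
    intro i j
    rw [hM, LinearMap.toMatrix'_apply]
    show (if i = ⟨0, hd⟩ then _ else _) = _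
    by_cases hj : j = (⟨0, hd⟩ : Fin d) <;> by_cases hi : i = (⟨0, hd⟩ : Fin d) <;>
      simp [hi, hj, Pi.single_apply, eq_comm]
  have htri : M.BlockTriangular OrderDual.toDual := by
    intro i j hij
    have hij' : (i : Fin d) < j := hij
    rw [hMe]
    have hj : j ≠ (⟨0, hd⟩ : Fin d) := by
      intro h
      rw [h] at hij'
      exact absurd hij' (by simp [Fin.lt_def])
    simp [hj, (ne_of_lt hij')]
  rw [Matrix.det_of_lowerTriangular M htri]
  apply Finset.prod_eq_one
  intro i _
  rw [hMe]; by_cases hi : i = (⟨0, hd⟩ : Fin d) <;> simp [hi]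

/-- the half-width vector of the box -/
noncomputable def cval (d : ℕ) (hd : 0 < d) (i : Fin d) : ℝ := if i = ⟨0, hd⟩ then 1 else 1/2

/-- the box -/
def box (d : ℕ) (hd : 0 < d) : Set (Fin d → ℝ) :=
  univ.pi fun i => Icc (-(cval d hd i)) (cval d hd i)

lemma cval_pos (d : ℕ) (hd : 0 < d) (i : Fin d) : 0 < cval d hd i := by
  unfold cval; split <;> norm_num

lemma image_S_subset_box (d : ℕ) (hd : 0 < d) (x : Fin d → ℝ)
    (hx : (∀ i, x i = 0 ∨ x i = 1) ∧ ∀ i, x i ≤ x ⟨0, hd⟩) :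
    shear d hd x ∈ box d hd := by
  intro i _
  rw [shear_apply]
  rcases hx.1 i with h1 | h1 <;> rcases hx.1 ⟨0, hd⟩ with h0 | h0 <;>
    have := hx.2 i <;>
    by_cases hi : i = (⟨0, hd⟩ : Fin d) <;>
    simp only [hi, if_true, if_false, cval, mem_Icc] at * <;>
    constructor <;> simp [h1, h0] at * <;> linarith

lemma vertices_subset (d : ℕ) (hd : 0 < d)
    (S : Set (Fin d → ℝ))
    (hS : S = {x : Fin d → ℝ | (∀ i, x i = 0 ∨ x i = 1) ∧ ∀ i, x i ≤ x ⟨0, hd⟩}) :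
    (univ.pi fun i => {-(cval d hd i), cval d hd i}) ⊆ shear d hd '' (S ∪ -S) := by
  have key : ∀ y : Fin d → ℝ, (∀ i, y i = -(cval d hd i) ∨ y i = cval d hd i) →
      y ⟨0, hd⟩ = 1 → ∃ x ∈ S, shear d hd x = y := by
    intro y hy h0
    refine ⟨fun i => if i = ⟨0, hd⟩ then 1 else y i + 1/2, ?_, ?_⟩
    · rw [hS]
      constructor
      · intro i
        by_cases hi : i = (⟨0, hd⟩ : Fin d)
        · simp [hi]
        · rcases hy i with h | h <;> simp [hi, h, cval] <;> norm_num
      · intro i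
        by_cases hi : i = (⟨0, hd⟩ : Fin d)
        · simp [hi]
        · rcases hy i with h | h <;> simp [hi, h, cval] <;> norm_num
    · funext i
      rw [shear_apply]
      by_cases hi : i = (⟨0, hd⟩ : Fin d)
      · simp [hi, h0]
      · simp [hi]
  intro y hy
  simp only [mem_pi, mem_univ, forall_true_left, mem_insert_iff, mem_singleton_iff] at hy
  have hy' : ∀ i, y i = -(cval d hd i) ∨ y i = cval d hd i := hy
  have h0 := hy' ⟨0, hd⟩
  rw [show cval d hd ⟨0, hd⟩ = 1 by simp [cval]] at h0
  rcases h0 with h0 | h0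
  · obtain ⟨x, hxS, hx⟩ := key (-y) (fun i => by rcases hy' i with h | h <;> simp [h]) (by simp [h0])
    refine ⟨-x, Or.inr (by simpa using hxS), ?_⟩
    rw [map_neg, hx, neg_neg]
  · obtain ⟨x, hxS, hx⟩ := key y hy' h0
    exact ⟨x, Or.inl hxS, hx⟩

lemma hull_image_eq_box (d : ℕ) (hd : 0 < d)
    (S : Set (Fin d → ℝ))
    (hS : S = {x : Fin d → ℝ | (∀ i, x i = 0 ∨ x i = 1) ∧ ∀ i, x i ≤ x ⟨0, hd⟩}) :
    convexHull ℝ (shear d hd '' (S ∪ -S)) = box d hd := by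
  have hbox : box d hd = convexHull ℝ (univ.pi fun i => {-(cval d hd i), cval d hd i}) := by
    have heq : (fun i => Icc (-(cval d hd i)) (cval d hd i)) =
        fun i => convexHull ℝ {-(cval d hd i), cval d hd i} := by
      funext i
      rw [convexHull_pair, segment_eq_Icc (by have := cval_pos d hd i; linarith)]
    rw [convexHull_pi]
    unfold box
    rw [heq]
  apply le_antisymm
  · apply convexHull_min _ (convex_pi fun i _ => convex_Icc _ _)
    rintro y ⟨x, hx, rfl⟩
    rcases hx with hx | hx
    · exact image_S_subset_box d hd x (by rwa [hS] at hx)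
    · rw [mem_neg] at hx
      rw [hS] at hx
      have h2 := image_S_subset_box d hd (-x) hx
      intro i _
      have h3 := h2 i trivial
      have h4 : shear d hd x i = -(shear d hd (-x) i) := by rw [map_neg]; simp
      rw [mem_Icc] at *
      rw [h4]
      constructor <;> linarith [h3.1, h3.2]
  · rw [hbox]
    exact convexHull_mono (vertices_subset d hd S hS)

lemma hull_eq_preimage (d : ℕ) (hd : 0 < d)
    (S : Set (Fin d → ℝ))
    (hS : S = {x : Fin d → ℝ | (∀ i, x i = 0 ∨ x i = 1) ∧ ∀ i, x i ≤ x ⟨0, hd⟩}) :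
    convexHull ℝ (S ∪ -S) = (shear d hd : (Fin d → ℝ) →ₗ[ℝ] (Fin d → ℝ)) ⁻¹' box d hd := by
  have h1 : (shear d hd : (Fin d → ℝ) →ₗ[ℝ] (Fin d → ℝ)) '' convexHull ℝ (S ∪ -S) = box d hd := by
    rw [LinearMap.image_convexHull]
    exact hull_image_eq_box d hd S hS
  rw [← h1]
  exact (Set.preimage_image_eq _ (shear d hd).injective).symm

lemma box_volume (d : ℕ) (hd : 0 < d) : volume (box d hd) = 2 := by
  unfold box
  rw [volume_pi_pi]
  have : ∀ i : Fin d, volume (Icc (-(cval d hd i)) (cval d hd i)) =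
      if i = ⟨0, hd⟩ then 2 else 1 := by
    intro i
    rw [Real.volume_Icc]
    unfold cval
    split <;> norm_num
  simp_rw [this]
  simp
theorem stmt_16 (d : ℕ) (hd : 0 < d)
    (S : Set (Fin d → ℝ))
    (hS : S = {x : Fin d → ℝ | (∀ i, x i = 0 ∨ x i = 1) ∧ ∀ i, x i ≤ x ⟨0, hd⟩}) :
    convexHull ℝ (S ∪ (-S)) =
      {x : Fin d → ℝ | |x ⟨0, hd⟩| ≤ 1 ∧
        ∀ i, i ≠ ⟨0, hd⟩ → (x ⟨0, hd⟩ - 1) / 2 ≤ x i ∧ x i ≤ (x ⟨0, hd⟩ + 1) / 2} ∧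
    volume (convexHull ℝ (S ∪ (-S))) = 2 ∧
    volume {x : Fin d → ℝ | ∀ i, |x i| ≤ 1} = 2 ^ d ∧
    volume {x : Fin d → ℝ | ∀ i, |x i| ≤ 1} / volume (convexHull ℝ (S ∪ (-S)))
      = 2 ^ (d - 1) := by
  have hpre : {x : Fin d → ℝ | |x ⟨0, hd⟩| ≤ 1 ∧
        ∀ i, i ≠ ⟨0, hd⟩ → (x ⟨0, hd⟩ - 1) / 2 ≤ x i ∧ x i ≤ (x ⟨0, hd⟩ + 1) / 2}
      = (shear d hd : (Fin d → ℝ) →ₗ[ℝ] (Fin d → ℝ)) ⁻¹' box d hd := by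
    ext x
    simp only [mem_setOf_eq, mem_preimage, box, mem_pi, mem_univ, forall_true_left,
      LinearEquiv.coe_coe, mem_Icc, shear_apply, abs_le]
    constructor
    · rintro ⟨⟨h1, h2⟩, h3⟩ i
      by_cases hi : i = (⟨0, hd⟩ : Fin d)
      · simp only [hi, if_true, cval, mem_Icc]
        exact ⟨h1, h2⟩
      · have h4 := h3 i hi
        simp only [hi, if_false, cval, if_neg hi, mem_Icc]
        constructor <;> linarith [h4.1, h4.2]
    · intro h
      have h0 := h ⟨0, hd⟩
      simp only [if_true, cval, mem_Icc] at h0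
      refine ⟨by simpa using h0, ?_⟩
      intro i hi
      have h4 := h i
      simp only [if_neg hi, cval, mem_Icc] at h4
      constructor <;> linarith [h4.1, h4.2]
  have hhull := hull_eq_preimage d hd S hS
  have hvol : volume (convexHull ℝ (S ∪ -S)) = 2 := by
    rw [hhull, Measure.addHaar_preimage_linearMap volume (by rw [shear_det]; norm_num),
      shear_det, box_volume]
    norm_num
  have hcube : volume {x : Fin d → ℝ | ∀ i, |x i| ≤ 1} = 2 ^ d := by
    have heq : {x : Fin d → ℝ | ∀ i, |x i| ≤ 1} = univ.pi fun _ : Fin d => Icc (-1:ℝ) 1 := by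
      ext x; simp [abs_le, Pi.le_def, forall_and]
    rw [heq, volume_pi_pi]
    simp only [Real.volume_Icc]
    norm_num
  refine ⟨by rw [hhull, hpre], hvol, hcube, ?_⟩
  rw [hvol, hcube, eq_comm, ENNReal.eq_div_iff (by norm_num) (by norm_num), ← pow_succ']
  congr 1
  omega
end

section
/- For p ∈ [1, ∞), the expected squared ℓ2 norm of a uniform sample from the unit ℓp ball B_p^d ⊆ ℝ^d equals (d²/(d+2)) · Γ(d/p)Γ(3/p) / (Γ(1/p)Γ((d+2)/p)). -/
/-!
Put `f x = ∑ xᵢ²` and `N x = ∑ |xᵢ| ^ p`. The sublevel set `{N ≤ t}` is the unit ball `B` dilated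
by `t ^ (1/p)` and `f` is 2-homogeneous, so the measure `ν = f dx` satisfies
`ν {N ≤ t} = t ^ ((d + 2)/p) ν(B)`. Writing `e^(-N x) = ∫_{N x}^∞ e^(-t) dt` and swapping the
integrals gives `∫ f e^(-N) = Γ((d + 2)/p + 1) ∫_B f`. On the other hand `e^(-N)` factorises over
the coordinates, so Fubini evaluates `∫ f e^(-N)` through one-dimensional Gamma integrals.
Dividing by `Vol(B) = (2 Γ(1/p + 1))^d / Γ(d/p + 1)` gives the formula.
-/

open MeasureTheory Real Set Pointwise

theorem integrable_comp_abs_of_integrableOn_Ioi {f : ℝ → ℝ} (hf : IntegrableOn f (Ioi 0)) :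
    Integrable fun x => f |x| := by
  have h_pos : IntegrableOn (fun x => f |x|) (Ioi 0) :=
    hf.congr_fun (fun x hx => by rw [abs_of_pos hx]) measurableSet_Ioi
  have h_neg : IntegrableOn (fun x => f |x|) (Iic 0) := by
    rw [integrableOn_Iic_iff_integrableOn_Iio]
    simpa [abs_neg] using h_pos.comp_neg
  rw [← integrableOn_univ, ← Iic_union_Ioi (a := (0 : ℝ))]
  exact h_neg.union h_pos

theorem integrable_abs_rpow_mul_exp_neg_abs_rpow {p q : ℝ} (hp : 0 < p) (hq : -1 < q) :
    Integrable fun t : ℝ => |t| ^ q * exp (-|t| ^ p) :=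
  integrable_comp_abs_of_integrableOn_Ioi (integrableOn_rpow_mul_exp_neg_rpow hq hp)

theorem integral_abs_rpow_mul_exp_neg_abs_rpow {p q : ℝ} (hp : 0 < p) (hq : -1 < q) :
    ∫ t : ℝ, |t| ^ q * exp (-|t| ^ p) = 2 * ((1 / p) * Gamma ((q + 1) / p)) := by
  rw [integral_comp_abs (f := fun t => t ^ q * exp (-t ^ p)),
    integral_rpow_mul_exp_neg_rpow hp hq]

theorem Fintype.prod_ite_eq_mul_pow {ι M : Type*} [Fintype ι] [DecidableEq ι] [CommMonoid M]
    (i : ι) (a b : M) :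
    ∏ j, (if j = i then a else b) = a * b ^ (Fintype.card ι - 1) := by
  rw [Finset.prod_ite, Finset.filter_eq', Finset.filter_ne', Finset.prod_const, Finset.prod_const,
    Finset.card_erase_of_mem (Finset.mem_univ i), if_pos (Finset.mem_univ i),
    Finset.card_singleton, pow_one, Finset.card_univ]

theorem integral_sum_mul_prod {ι E : Type*} [Fintype ι] [MeasureSpace E]
    [SigmaFinite (volume : Measure E)] {g h : E → ℝ} (hh : Integrable h)
    (hgh : Integrable fun t => g t * h t) :
    ∫ x : ι → E, (∑ i, g (x i)) * ∏ j, h (x j) =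
      Fintype.card ι * (∫ t, g t * h t) * (∫ t, h t) ^ (Fintype.card ι - 1) := by
  classical
  let F : ι → ι → E → ℝ := fun i j t => (if j = i then g t else 1) * h t
  have hF : ∀ i j, Integrable (F i j) := fun i j => by
    by_cases hji : j = i <;> simpa [F, hji]
  have hF_int : ∀ i j, ∫ t, F i j t = if j = i then ∫ t, g t * h t else ∫ t, h t :=
    fun i j => by by_cases hji : j = i <;> simp [F, hji]
  have h_expand : ∀ x : ι → E, (∑ i, g (x i)) * ∏ j, h (x j) = ∑ i, ∏ j, F i j (x j) :=
    fun x => by simp only [F, Finset.prod_mul_distrib, Finset.sum_mul, Fintype.prod_ite_eq']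
  simp_rw [h_expand]
  rw [volume_pi, integral_finsetSum _ fun i _ => Integrable.fintype_prod (hF i)]
  simp_rw [integral_fintype_prod_eq_prod, hF_int, Fintype.prod_ite_eq_mul_pow, Finset.sum_const,
    Finset.card_univ, nsmul_eq_mul, mul_assoc]

section Scaling

variable {E : Type*} [NormedAddCommGroup E] [NormedSpace ℝ E] [MeasurableSpace E] [BorelSpace E]
  [FiniteDimensional ℝ E] (μ : Measure E) [μ.IsAddHaarMeasure]

theorem lintegral_comp_smul_of_pos (F : E → ENNReal) {r : ℝ} (hr : 0 < r) :
    ∫⁻ x, F (r • x) ∂μ = ENNReal.ofReal (r ^ Module.finrank ℝ E)⁻¹ * ∫⁻ x, F x ∂μ := by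
  rw [← smul_eq_mul, ← lintegral_smul_measure, ← abs_of_pos (inv_pos.2 (pow_pos hr _)),
    ← Measure.map_addHaar_smul μ hr.ne']
  exact (lintegral_map_equiv F (MeasurableEquiv.smul₀ r hr.ne')).symm

theorem withDensity_smul_set_of_pos {g : E → ENNReal} {k r : ℝ} (hr : 0 < r)
    (hg : ∀ x, g (r • x) = ENNReal.ofReal (r ^ k) * g x) {s : Set E} (hs : MeasurableSet s) :
    μ.withDensity g (r • s) =
      ENNReal.ofReal (r ^ (Module.finrank ℝ E + k)) * μ.withDensity g s := by
  have h_ind : ∀ x, (r • s).indicator g (r • x) = ENNReal.ofReal (r ^ k) * s.indicator g x := by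
    intro x
    by_cases hx : x ∈ s
    · rw [indicator_of_mem (smul_mem_smul_set hx), indicator_of_mem hx, hg]
    · simp [hx, smul_mem_smul_set_iff₀ hr.ne']
  have h_scale := lintegral_comp_smul_of_pos μ ((r • s).indicator g) hr
  simp only [h_ind, lintegral_const_mul' _ _ ENNReal.ofReal_ne_top] at h_scale
  rw [withDensity_apply _ hs, withDensity_apply _ (hs.const_smul₀ r), ← lintegral_indicator hs,
    ← lintegral_indicator (hs.const_smul₀ r)]
  have hrn : (r ^ Module.finrank ℝ E : ℝ) ≠ 0 := by positivity
  calc ∫⁻ x, (r • s).indicator g x ∂μ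
      = ENNReal.ofReal (r ^ Module.finrank ℝ E) *
          (ENNReal.ofReal (r ^ Module.finrank ℝ E)⁻¹ * ∫⁻ x, (r • s).indicator g x ∂μ) := by
        rw [← mul_assoc, ← ENNReal.ofReal_mul (by positivity), mul_inv_cancel₀ hrn,
          ENNReal.ofReal_one, one_mul]
    _ = ENNReal.ofReal (r ^ (Module.finrank ℝ E + k)) * ∫⁻ x, s.indicator g x ∂μ := by
        rw [← h_scale, ← mul_assoc, ← ENNReal.ofReal_mul (by positivity), rpow_add hr,
          rpow_natCast]

end Scaling

theorem lintegral_Ici_exp_neg (a : ℝ) :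
    ∫⁻ t in Ici a, ENNReal.ofReal (exp (-t)) = ENNReal.ofReal (exp (-a)) := by
  rw [← setLIntegral_congr Ioi_ae_eq_Ici, ← ofReal_integral_eq_lintegral_ofReal
    (integrableOn_exp_neg_Ioi a) (ae_of_all _ fun t => (exp_pos _).le), integral_exp_neg_Ioi]

theorem lintegral_Ioi_exp_neg_mul_rpow {q : ℝ} (hq : -1 < q) :
    ∫⁻ t in Ioi 0, ENNReal.ofReal (exp (-t) * t ^ q) = ENNReal.ofReal (Gamma (q + 1)) := by
  have h := GammaIntegral_convergent (s := q + 1) (by linarith)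
  rw [add_sub_cancel_right] at h
  rw [← ofReal_integral_eq_lintegral_ofReal h, Gamma_eq_integral (by linarith),
    add_sub_cancel_right]
  exact (ae_restrict_iff' measurableSet_Ioi).mpr (ae_of_all _ fun t (ht : 0 < t) => by positivity)

theorem lintegral_exp_neg_eq_of_measure_le {α : Type*} [MeasurableSpace α] (ν : Measure α)
    [SFinite ν] {N : α → ℝ} (hN : Measurable N) (hN_nonneg : ∀ x, 0 ≤ N x) {q : ℝ} (hq : -1 < q)
    {c : ENNReal} (hν : ∀ t > 0, ν {x | N x ≤ t} = ENNReal.ofReal (t ^ q) * c) :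
    ∫⁻ x, ENNReal.ofReal (exp (-N x)) ∂ν = ENNReal.ofReal (Gamma (q + 1)) * c := by
  set e : ℝ → ENNReal := fun t => ENNReal.ofReal (exp (-t))
  have he : Measurable e := measurable_neg.exp.ennreal_ofReal
  have h_level : ∀ t, ∫⁻ x, (Ici (N x)).indicator e t ∂ν = e t * ν {x | N x ≤ t} := fun t => by
    rw [← lintegral_indicator_const (measurableSet_le hN measurable_const)]
    congr with x
  have h_meas : Measurable (Function.uncurry fun x t => (Ici (N x)).indicator e t) :=
    (he.comp measurable_snd).indicator (measurableSet_le (hN.comp measurable_fst) measurable_snd)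
  have h_support : Function.support (fun t => e t * ν {x | N x ≤ t}) ⊆ Ici 0 := by
    intro t ht
    by_contra h_neg
    have h_empty : {x | N x ≤ t} = ∅ :=
      eq_empty_of_forall_notMem fun x hx => h_neg (le_trans (hN_nonneg x) hx)
    simp [h_empty] at ht
  calc ∫⁻ x, e (N x) ∂ν = ∫⁻ x, (∫⁻ t, (Ici (N x)).indicator e t) ∂ν := by
        congr with x
        rw [lintegral_indicator measurableSet_Ici, lintegral_Ici_exp_neg]
    _ = ∫⁻ t, e t * ν {x | N x ≤ t} := by
        rw [lintegral_lintegral_swap h_meas.aemeasurable]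
        simp_rw [h_level]
    _ = ∫⁻ t in Ioi 0, ENNReal.ofReal (exp (-t) * t ^ q) * c := by
        rw [← setLIntegral_eq_of_support_subset h_support, ← setLIntegral_congr Ioi_ae_eq_Ici]
        refine setLIntegral_congr_fun measurableSet_Ioi fun t ht => ?_
        rw [hν t ht, ← mul_assoc, ENNReal.ofReal_mul (exp_pos _).le]
    _ = ENNReal.ofReal (Gamma (q + 1)) * c := by
        rw [lintegral_mul_const _ (by fun_prop), lintegral_Ioi_exp_neg_mul_rpow hq]

section LpBall

variable {ι : Type*} [Fintype ι] {p : ℝ}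

theorem smul_setOf_sum_rpow_le {r : ℝ} (hr : 0 < r) :
    r • {x : ι → ℝ | ∑ i, |x i| ^ p ≤ 1} = {x | ∑ i, |x i| ^ p ≤ r ^ p} := by
  ext y
  rw [mem_smul_set_iff_inv_smul_mem₀ hr.ne']
  simp only [mem_ofPred_eq, Pi.smul_apply, smul_eq_mul, abs_mul, abs_inv, abs_of_pos hr,
    mul_rpow (inv_nonneg.mpr hr.le) (abs_nonneg _), inv_rpow hr.le, ← Finset.mul_sum,
    inv_mul_le_iff₀ (rpow_pos_of_pos hr p), mul_one]

theorem volume_sum_rpow_le_one [Nonempty ι] (hp : 1 ≤ p) :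
    volume {x : ι → ℝ | ∑ i, |x i| ^ p ≤ 1} =
      .ofReal ((2 * Gamma (1 / p + 1)) ^ Fintype.card ι / Gamma (Fintype.card ι / p + 1)) := by
  have h_set : {x : ι → ℝ | (∑ i, |x i| ^ p) ^ (1 / p) ≤ 1} = {x | ∑ i, |x i| ^ p ≤ 1} := by
    ext x
    rw [mem_ofPred_eq, mem_ofPred_eq, one_div,
      rpow_inv_le_iff_of_pos (by positivity) zero_le_one (by linarith), one_rpow]
  rw [← h_set, volume_sum_rpow_le ι hp 1, ENNReal.ofReal_one, one_pow, one_mul]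

theorem integral_sum_sq_mul_exp_neg_sum_rpow (hp : 0 < p) :
    ∫ x : ι → ℝ, (∑ i, x i ^ 2) * exp (-∑ i, |x i| ^ p) =
      Fintype.card ι * (2 * ((1 / p) * Gamma (3 / p))) *
        (2 * ((1 / p) * Gamma (1 / p))) ^ (Fintype.card ι - 1) := by
  have h_sq : ∀ t : ℝ, |t| ^ (2 : ℝ) = t ^ 2 := fun t => by rw [rpow_two, sq_abs]
  have h0 := integrable_abs_rpow_mul_exp_neg_abs_rpow hp (q := 0) (by norm_num)
  have h2 := integrable_abs_rpow_mul_exp_neg_abs_rpow hp (q := 2) (by norm_num)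
  have v0 := integral_abs_rpow_mul_exp_neg_abs_rpow hp (q := 0) (by norm_num)
  have v2 := integral_abs_rpow_mul_exp_neg_abs_rpow hp (q := 2) (by norm_num)
  simp only [rpow_zero, one_mul, zero_add, h_sq] at h0 h2 v0 v2
  simp_rw [← Finset.sum_neg_distrib, exp_sum]
  rw [integral_sum_mul_prod h0 h2, v0, v2]
  norm_num

theorem integral_sum_sq_mul_exp_neg_sum_rpow_eq_Gamma_mul (hp : 0 < p) :
    ∫ x : ι → ℝ, (∑ i, x i ^ 2) * exp (-∑ i, |x i| ^ p) =
      Gamma ((Fintype.card ι + 2) / p + 1) *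
        ∫ x in {x : ι → ℝ | ∑ i, |x i| ^ p ≤ 1}, ∑ i, x i ^ 2 := by
  set f : (ι → ℝ) → ℝ := fun x => ∑ i, x i ^ 2
  set N : (ι → ℝ) → ℝ := fun x => ∑ i, |x i| ^ p
  have hf_nonneg : ∀ x, 0 ≤ f x := fun x => by positivity
  have hf : Measurable f := by fun_prop
  have hN : Measurable N := by fun_prop
  set ν := volume.withDensity fun x => ENNReal.ofReal (f x)
  have hν : ∀ t > 0, ν {x | N x ≤ t} =
      ENNReal.ofReal (t ^ ((Fintype.card ι + 2) / p)) * ν {x | N x ≤ 1} := by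
    intro t ht
    set r := t ^ (1 / p)
    have hr : 0 < r := rpow_pos_of_pos ht _
    have h_hom : ∀ x : ι → ℝ, ENNReal.ofReal (f (r • x)) =
        ENNReal.ofReal (r ^ (2 : ℝ)) * ENNReal.ofReal (f x) := fun x => by
      rw [← ENNReal.ofReal_mul (by positivity), rpow_two]
      simp [f, mul_pow, Finset.mul_sum]
    have h_set : {x | N x ≤ t} = r • {x | N x ≤ 1} := by
      rw [smul_setOf_sum_rpow_le hr, ← rpow_mul ht.le, one_div_mul_cancel hp.ne', rpow_one]
    rw [h_set, withDensity_smul_set_of_pos volume hr h_hom (measurableSet_le hN measurable_const),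
      Module.finrank_fintype_fun_eq_card, ← rpow_mul ht.le, one_div_mul_eq_div]
  have h_layer := lintegral_exp_neg_eq_of_measure_le ν hN (fun x => by positivity)
    (lt_of_lt_of_le (by norm_num : (-1 : ℝ) < 0) (by positivity)) hν
  have h_density :
      ∫⁻ x, ENNReal.ofReal (f x * exp (-N x)) = ∫⁻ x, ENNReal.ofReal (exp (-N x)) ∂ν := by
    rw [lintegral_withDensity_eq_lintegral_mul _ hf.ennreal_ofReal (by fun_prop)]
    simp only [Pi.mul_apply, ENNReal.ofReal_mul (hf_nonneg _)]
  have hΓ : 0 ≤ Gamma ((Fintype.card ι + 2) / p + 1) := (Gamma_pos_of_pos (by positivity)).le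
  change ∫ x, f x * exp (-N x) = _
  rw [integral_eq_lintegral_of_nonneg_ae (ae_of_all _ fun x => by positivity) (by fun_prop),
    h_density, h_layer, withDensity_apply _ (measurableSet_le hN measurable_const),
    ENNReal.toReal_mul, ENNReal.toReal_ofReal hΓ,
    integral_eq_lintegral_of_nonneg_ae (ae_of_all _ hf_nonneg) (by fun_prop)]

theorem setIntegral_sum_sq_sum_rpow_le_one (hp : 0 < p) :
    ∫ x in {x : ι → ℝ | ∑ i, |x i| ^ p ≤ 1}, ∑ i, x i ^ 2 =
      Fintype.card ι * (2 * ((1 / p) * Gamma (3 / p))) *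
        (2 * ((1 / p) * Gamma (1 / p))) ^ (Fintype.card ι - 1) /
          Gamma ((Fintype.card ι + 2) / p + 1) := by
  rw [eq_div_iff (Gamma_pos_of_pos (by positivity)).ne', mul_comm,
    ← integral_sum_sq_mul_exp_neg_sum_rpow_eq_Gamma_mul hp, integral_sum_sq_mul_exp_neg_sum_rpow hp]

end LpBall

theorem stmt_18 (d : ℕ) (hd : 0 < d) (p : ℝ) (hp : 1 ≤ p) :
    ⨍ x in {x : Fin d → ℝ | (∑ i, |x i| ^ p) ≤ 1}, (∑ i, (x i) ^ 2) ∂volume =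
      ((d : ℝ) ^ 2 / ((d : ℝ) + 2)) *
        (Gamma ((d : ℝ) / p) * Gamma (3 / p)) / (Gamma (1 / p) * Gamma (((d : ℝ) + 2) / p)) := by
  have hp0 : 0 < p := by linarith
  obtain ⟨n, rfl⟩ := Nat.exists_eq_add_one_of_ne_zero hd.ne'
  have hΓ : ∀ s : ℝ, 0 < s → Gamma s ≠ 0 := fun s hs => (Gamma_pos_of_pos hs).ne'
  rw [setAverage_eq, measureReal_def, volume_sum_rpow_le_one hp,
    ENNReal.toReal_ofReal (by positivity), setIntegral_sum_sq_sum_rpow_le_one hp0, smul_eq_mul]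
  simp only [Fintype.card_fin, add_tsub_cancel_right, Nat.cast_add, Nat.cast_one]
  rw [Gamma_add_one (by positivity), Gamma_add_one (by positivity), Gamma_add_one (by positivity),
    pow_succ]
  have := hΓ (1 / p) (by positivity)
  have := hΓ (3 / p) (by positivity)
  have := hΓ ((n + 1 : ℝ) / p) (by positivity)
  have := hΓ ((n + 1 + 2 : ℝ) / p) (by positivity)
  field_simp
end
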